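/- arXiv:math/0703296 — 4 statements merged into one kernel-verified Lean document; each statement's English description precedes it below -/
import Mathlib

section
/- Let Δ be an irreducible root system (reduced, crystallographic) in a finite-dimensional real inner product space with base {α₁, …, α_r}, and fix an index i. If some root γ ∈ Δ has c_i(γ) = 2, then there exist roots α, β ∈ Δ with c_i(α) = c_i(β) = 1 and α + β ∈ Δ. (Claim established at the end of the proof of Proposition 5.2.6: take γ with c_i(γ) = 2 of minimal height; then α = α_i and β = γ − α_i work.) -/
open RealInnerProductSpace

theorem stmt6 {V : Type*} [NormedAddCommGroup V] [InnerProductSpace ℝ V]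
    [FiniteDimensional ℝ V]
    (Δ : Set V) (hfin : Δ.Finite) (h0 : (0 : V) ∉ Δ)
    (hrefl : ∀ α ∈ Δ, ∀ β ∈ Δ, β - (2 * ⟪β, α⟫ / ⟪α, α⟫) • α ∈ Δ)
    (hcrys : ∀ α ∈ Δ, ∀ β ∈ Δ, ∃ n : ℤ, 2 * ⟪β, α⟫ = (n : ℝ) * ⟪α, α⟫)
    (hred : ∀ α ∈ Δ, ∀ t : ℝ, t • α ∈ Δ → t • α = α ∨ t • α = -α)
    -- irreducible
    (hne : Δ.Nonempty)
    (hirr : ∀ A B : Set V, Δ = A ∪ B → Disjoint A B →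
      (∀ a ∈ A, ∀ b ∈ B, ⟪a, b⟫ = 0) → A = ∅ ∨ B = ∅)
    -- base `α₁, …, α_r` with coefficient functions `c i`
    (r : ℕ) (b : Fin r → V) (hbΔ : ∀ i, b i ∈ Δ)
    (hli : LinearIndependent ℝ b)
    (c : Fin r → V → ℤ)
    (hrep : ∀ α ∈ Δ, α = ∑ i, (c i α : ℝ) • b i)
    (hsign : ∀ α ∈ Δ, (∀ i, 0 ≤ c i α) ∨ (∀ i, c i α ≤ 0))
    (i : Fin r) (γ : V) (hγ : γ ∈ Δ) (hcγ : c i γ = 2) :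
    ∃ α ∈ Δ, ∃ β ∈ Δ, c i α = 1 ∧ c i β = 1 ∧ α + β ∈ Δ := by
  -- basic facts
  have hpos : ∀ δ ∈ Δ, 0 < ⟪δ, δ⟫ := by
    intro δ hδ
    have h1 : δ ≠ 0 := fun h => h0 (h ▸ hδ)
    have h2 : ⟪δ, δ⟫ ≠ 0 := inner_self_ne_zero.mpr h1
    exact lt_of_le_of_ne real_inner_self_nonneg (Ne.symm h2)
  have hneg : ∀ δ ∈ Δ, -δ ∈ Δ := by
    intro δ hδ
    have h := hrefl δ hδ δ hδ
    have hne' : ⟪δ, δ⟫ ≠ 0 := ne_of_gt (hpos δ hδ)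
    have : (2 * ⟪δ, δ⟫ / ⟪δ, δ⟫) = 2 := by field_simp
    rw [this] at h
    have : δ - (2 : ℝ) • δ = -δ := by
      rw [two_smul]; abel
    rwa [this] at h
  -- uniqueness of coefficients
  have hcoef : ∀ δ ∈ Δ, ∀ d : Fin r → ℤ, δ = ∑ k, (d k : ℝ) • b k → ∀ k, c k δ = d k := by
    intro δ hδ d hd k
    have hsum : ∑ k, ((c k δ : ℝ) - (d k : ℝ)) • b k = 0 := by
      simp only [sub_smul, Finset.sum_sub_distrib]
      rw [← hrep δ hδ, ← hd, sub_self]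
    have := Fintype.linearIndependent_iff.mp hli _ hsum k
    have : (c k δ : ℝ) = (d k : ℝ) := by linarith [sub_eq_zero.mp this]
    exact_mod_cast this
  have hcb : ∀ k j, c k (b j) = if k = j then 1 else 0 := by
    intro k j
    refine hcoef (b j) (hbΔ j) (fun k => if k = j then 1 else 0) ?_ k
    simp [ite_smul, Finset.sum_ite_eq']
  -- key lemma: positive inner product of distinct roots gives a root difference
  have hkey : ∀ α ∈ Δ, ∀ β ∈ Δ, α ≠ β → 0 < ⟪α, β⟫ → α - β ∈ Δ := by
    intro α hα β hβ hne' hip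
    obtain ⟨n, hn⟩ := hcrys β hβ α hα
    obtain ⟨m, hm⟩ := hcrys α hα β hβ
    rw [real_inner_comm α β] at hm
    have hαα := hpos α hα
    have hββ := hpos β hβ
    have hn1 : 1 ≤ n := by
      have h1 : 0 < (n : ℝ) * ⟪β, β⟫ := hn ▸ by linarith
      have h2 : (0 : ℝ) < n := by
        rcases mul_pos_iff.mp h1 with ⟨h, _⟩ | ⟨_, h⟩
        · exact h
        · linarith
      have h3 : (0 : ℤ) < n := by exact_mod_cast h2
      omega
    have hm1 : 1 ≤ m := by
      have h1 : 0 < (m : ℝ) * ⟪α, α⟫ := hm ▸ by linarith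
      have h2 : (0 : ℝ) < m := by
        rcases mul_pos_iff.mp h1 with ⟨h, _⟩ | ⟨_, h⟩
        · exact h
        · linarith
      have h3 : (0 : ℤ) < m := by exact_mod_cast h2
      omega
    have hcs : ⟪α, β⟫ * ⟪α, β⟫ ≤ ⟪α, α⟫ * ⟪β, β⟫ := real_inner_mul_inner_self_le α β
    have hnm : n * m ≤ 4 := by
      have h1 : (n : ℝ) * m * (⟪α, α⟫ * ⟪β, β⟫) = 4 * (⟪α, β⟫ * ⟪α, β⟫) := by
        nlinarith [hn, hm]
      have h3 : (n : ℝ) * m ≤ 4 := by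
        by_contra h
        push_neg at h
        nlinarith [h1, hcs, mul_pos hαα hββ]
      exact_mod_cast h3
    have hcase : n = 1 ∨ m = 1 ∨ (n = 2 ∧ m = 2) := by
      have h5 : n * 1 ≤ n * m := mul_le_mul_of_nonneg_left hm1 (by linarith)
      rw [mul_one] at h5
      have hn4 : n ≤ 4 := by linarith
      interval_cases n <;> omega
    rcases hcase with h1 | h1 | ⟨h1, h2⟩
    · -- s_β(α) = α - β
      have h := hrefl β hβ α hα
      have hc : 2 * ⟪α, β⟫ / ⟪β, β⟫ = 1 := by
        rw [hn, h1]; push_cast; field_simp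
      rw [hc, one_smul] at h
      exact h
    · -- s_α(β) = β - α, then negate
      have h := hrefl α hα β hβ
      have hc : 2 * ⟪β, α⟫ / ⟪α, α⟫ = 1 := by
        rw [real_inner_comm α β, hm, h1]; push_cast; field_simp
      rw [hc, one_smul] at h
      have := hneg _ h
      rwa [neg_sub] at this
    · -- n = m = 2 forces α = β
      exfalso
      apply hne'
      have e1 : ⟪α, β⟫ = ⟪β, β⟫ := by rw [h1] at hn; push_cast at hn; linarith
      have e2 : ⟪α, β⟫ = ⟪α, α⟫ := by rw [h2] at hm; push_cast at hm; linarith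
      have : ⟪α - β, α - β⟫ = 0 := by
        rw [inner_sub_left, inner_sub_right, inner_sub_right, real_inner_comm α β]
        linarith
      have := inner_self_eq_zero.mp this
      exact sub_eq_zero.mp this
  -- pick a minimal-height root with c i = 2
  set S : Set V := {δ | δ ∈ Δ ∧ c i δ = 2} with hS
  have hSfin : S.Finite := hfin.subset (fun x hx => hx.1)
  have hSne : S.Nonempty := ⟨γ, hγ, hcγ⟩
  obtain ⟨δ₀, ⟨hδ₀Δ, hδ₀c⟩, hmin⟩ :=
    Set.exists_min_image S (fun δ => ∑ k, c k δ) hSfin hSne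
  have hδ₀sign : ∀ k, 0 ≤ c k δ₀ := by
    rcases hsign δ₀ hδ₀Δ with h | h
    · exact h
    · exfalso; have := h i; omega
  -- find j with ⟪δ₀, b j⟫ > 0
  have hsum : ⟪δ₀, δ₀⟫ = ∑ k, (c k δ₀ : ℝ) * ⟪δ₀, b k⟫ := by
    nth_rewrite 2 [hrep δ₀ hδ₀Δ]
    rw [inner_sum]
    simp [real_inner_smul_right]
  have hj : ∃ j, 0 < ⟪δ₀, b j⟫ := by
    by_contra h
    push_neg at h
    have : ∑ k, (c k δ₀ : ℝ) * ⟪δ₀, b k⟫ ≤ 0 := by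
      apply Finset.sum_nonpos
      intro k _
      have h1 : (0 : ℝ) ≤ (c k δ₀ : ℝ) := by exact_mod_cast hδ₀sign k
      exact mul_nonpos_of_nonneg_of_nonpos h1 (h k)
    have := hpos δ₀ hδ₀Δ
    linarith [hsum ▸ this]
  obtain ⟨j, hjpos⟩ := hj
  have hδ₀nej : δ₀ ≠ b j := by
    intro h
    have := hcb i j
    rw [← h] at this
    rw [hδ₀c] at this
    split at this <;> omega
  -- δ₀ - b j ∈ Δ
  have hdiff : δ₀ - b j ∈ Δ := by
    exact hkey δ₀ hδ₀Δ (b j) (hbΔ j) hδ₀nej hjpos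
  -- coefficients of δ₀ - b j
  have hdcoef : ∀ k, c k (δ₀ - b j) = c k δ₀ - (if k = j then 1 else 0) := by
    refine hcoef (δ₀ - b j) hdiff (fun k => c k δ₀ - (if k = j then 1 else 0)) ?_
    push_cast
    simp only [sub_smul, Finset.sum_sub_distrib]
    rw [← hrep δ₀ hδ₀Δ]
    congr 1
    simp [ite_smul, Finset.sum_ite_eq']
  by_cases hji : j = i
  · -- done: α = b i, β = δ₀ - b i
    subst hji
    refine ⟨b j, hbΔ j, δ₀ - b j, hdiff, ?_, ?_, ?_⟩
    · simp [hcb]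
    · rw [hdcoef]; simp [hδ₀c]
    · rw [add_sub_cancel]; exact hδ₀Δ
  · -- contradiction with minimality
    exfalso
    have hmem : δ₀ - b j ∈ S := by
      refine ⟨hdiff, ?_⟩
      rw [hdcoef]
      simp [Ne.symm hji, hji, hδ₀c]
    have hle := hmin _ hmem
    have hsum' : ∑ k, c k (δ₀ - b j) = (∑ k, c k δ₀) - 1 := by
      simp only [hdcoef, Finset.sum_sub_distrib]
      congr 1
      simp [Finset.sum_ite_eq']
    omega
end

section
/- Let Z = {(x₁, x₂, x₃, x₄) ∈ ℂ⁴ : x₁ ≠ 0, x₂ ≠ 0, and x₁²x₂² − x₃² = 0}, equipped with the subspace topology from ℂ⁴ (with its usual topology), and set Z₊ = {x ∈ Z : x₃ = x₁x₂} and Z₋ = {x ∈ Z : x₃ = −x₁x₂}. Then Z = Z₊ ∪ Z₋, Z₊ ∩ Z₋ = ∅, and Z₊ and Z₋ are nonempty, connected, and closed in Z. Consequently Z is not connected and has exactly two connected components. (The key claim of Knop's counterexample, Example 5.13: the zero fiber of the moment map μ(x) = x₁²x₂² − x₃² on X = ℂ^× × ℂ^× × ℂ × ℂ has two connected components.) 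-/
/-- The zero fiber of the moment map `μ(x) = x₁²x₂² − x₃²` on `ℂ^× × ℂ^× × ℂ × ℂ`. -/
def Zset : Set (ℂ × ℂ × ℂ × ℂ) :=
  {p | p.1 ≠ 0 ∧ p.2.1 ≠ 0 ∧ p.1 ^ 2 * p.2.1 ^ 2 - p.2.2.1 ^ 2 = 0}

def Zplus : Set (ℂ × ℂ × ℂ × ℂ) := {p ∈ Zset | p.2.2.1 = p.1 * p.2.1}

def Zminus : Set (ℂ × ℂ × ℂ × ℂ) := {p ∈ Zset | p.2.2.1 = -(p.1 * p.2.1)}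

open Set

lemma zplus_eq : Zplus = {p : ℂ × ℂ × ℂ × ℂ | p.1 ≠ 0 ∧ p.2.1 ≠ 0 ∧ p.2.2.1 = p.1 * p.2.1} := by
  ext ⟨a, b, c, d⟩
  simp only [Zplus, Zset, mem_setOf_eq, mem_sep_iff]
  constructor
  · rintro ⟨⟨ha, hb, _⟩, hc⟩; exact ⟨ha, hb, hc⟩
  · rintro ⟨ha, hb, hc⟩; exact ⟨⟨ha, hb, by rw [hc]; ring⟩, hc⟩

lemma zminus_eq : Zminus = {p : ℂ × ℂ × ℂ × ℂ | p.1 ≠ 0 ∧ p.2.1 ≠ 0 ∧ p.2.2.1 = -(p.1 * p.2.1)} := by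
  ext ⟨a, b, c, d⟩
  simp only [Zminus, Zset, mem_setOf_eq, mem_sep_iff]
  constructor
  · rintro ⟨⟨ha, hb, _⟩, hc⟩; exact ⟨ha, hb, hc⟩
  · rintro ⟨ha, hb, hc⟩; exact ⟨⟨ha, hb, by rw [hc]; ring⟩, hc⟩

lemma zplus_image :
    Zplus = (fun q : ℂ × ℂ × ℂ => (q.1, q.2.1, q.1 * q.2.1, q.2.2)) ''
      (({0}ᶜ : Set ℂ) ×ˢ (({0}ᶜ : Set ℂ) ×ˢ (univ : Set ℂ))) := by
  rw [zplus_eq]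
  ext ⟨a, b, c, d⟩
  constructor
  · rintro ⟨ha, hb, hc⟩
    exact ⟨(a, b, d), ⟨ha, hb, trivial⟩, Prod.ext_iff.mpr ⟨rfl, Prod.ext_iff.mpr ⟨rfl, Prod.ext_iff.mpr ⟨hc.symm, rfl⟩⟩⟩⟩
  · rintro ⟨⟨x, y, z⟩, ⟨hx, hy, -⟩, h⟩
    simp only [Prod.mk.injEq] at h
    obtain ⟨rfl, rfl, rfl, rfl⟩ := h
    exact ⟨hx, hy, rfl⟩

lemma zminus_image :
    Zminus = (fun q : ℂ × ℂ × ℂ => (q.1, q.2.1, -(q.1 * q.2.1), q.2.2)) ''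
      (({0}ᶜ : Set ℂ) ×ˢ (({0}ᶜ : Set ℂ) ×ˢ (univ : Set ℂ))) := by
  rw [zminus_eq]
  ext ⟨a, b, c, d⟩
  constructor
  · rintro ⟨ha, hb, hc⟩
    exact ⟨(a, b, d), ⟨ha, hb, trivial⟩, Prod.ext_iff.mpr ⟨rfl, Prod.ext_iff.mpr ⟨rfl, Prod.ext_iff.mpr ⟨hc.symm, rfl⟩⟩⟩⟩
  · rintro ⟨⟨x, y, z⟩, ⟨hx, hy, -⟩, h⟩
    simp only [Prod.mk.injEq] at h
    obtain ⟨rfl, rfl, rfl, rfl⟩ := h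
    exact ⟨hx, hy, rfl⟩

lemma isConnected_compl_zero : IsConnected ({0}ᶜ : Set ℂ) :=
  isConnected_compl_singleton_of_one_lt_rank (by rw [Complex.rank_real_complex]; norm_num) 0

lemma isConnected_zplus : IsConnected Zplus := by
  rw [zplus_image]
  exact (isConnected_compl_zero.prod (isConnected_compl_zero.prod isConnected_univ)).image _
    (by fun_prop)

lemma isConnected_zminus : IsConnected Zminus := by
  rw [zminus_image]
  exact (isConnected_compl_zero.prod (isConnected_compl_zero.prod isConnected_univ)).image _
    (by fun_prop)

lemma zset_union : Zset = Zplus ∪ Zminus := by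
  ext ⟨a, b, c, d⟩
  constructor
  · rintro ⟨ha, hb, h⟩
    have : (a * b - c) * (a * b + c) = 0 := by linear_combination h
    rcases mul_eq_zero.1 this with h' | h'
    · left; exact ⟨⟨ha, hb, h⟩, by linear_combination -h'⟩
    · right; exact ⟨⟨ha, hb, h⟩, by linear_combination h'⟩
  · rintro (⟨hz, -⟩ | ⟨hz, -⟩) <;> exact hz

lemma zpm_disjoint : Zplus ∩ Zminus = ∅ := by
  ext ⟨a, b, c, d⟩
  simp only [mem_inter_iff, mem_empty_iff_false, iff_false]
  rintro ⟨⟨⟨ha, hb, -⟩, h1⟩, ⟨-, h2⟩⟩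
  have : a * b = 0 := by
    have := h1.symm.trans h2
    linear_combination this / 2
  exact (mul_ne_zero ha hb) this

lemma zplus_mem : ((1 : ℂ), (1 : ℂ), (1 : ℂ), (0 : ℂ)) ∈ Zplus := by
  rw [zplus_eq]; norm_num

lemma zminus_mem : ((1 : ℂ), (1 : ℂ), (-1 : ℂ), (0 : ℂ)) ∈ Zminus := by
  rw [zminus_eq]; norm_num

lemma closed_plus : IsClosed (Subtype.val ⁻¹' Zplus : Set ↥Zset) := by
  have : (Subtype.val ⁻¹' Zplus : Set ↥Zset) =
      {z : ↥Zset | (z : ℂ × ℂ × ℂ × ℂ).2.2.1 = (z : ℂ × ℂ × ℂ × ℂ).1 * (z : ℂ × ℂ × ℂ × ℂ).2.1} := by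
    ext z
    simp only [mem_preimage, mem_setOf_eq, zplus_eq]
    exact ⟨fun ⟨_, _, h⟩ => h, fun h => ⟨z.2.1, z.2.2.1, h⟩⟩
  rw [this]
  exact isClosed_eq (by fun_prop) (by fun_prop)

lemma closed_minus : IsClosed (Subtype.val ⁻¹' Zminus : Set ↥Zset) := by
  have : (Subtype.val ⁻¹' Zminus : Set ↥Zset) =
      {z : ↥Zset | (z : ℂ × ℂ × ℂ × ℂ).2.2.1 =
        -((z : ℂ × ℂ × ℂ × ℂ).1 * (z : ℂ × ℂ × ℂ × ℂ).2.1)} := by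
    ext z
    simp only [mem_preimage, mem_setOf_eq, zminus_eq]
    exact ⟨fun ⟨_, _, h⟩ => h, fun h => ⟨z.2.1, z.2.2.1, h⟩⟩
  rw [this]
  exact isClosed_eq (by fun_prop) (by fun_prop)

lemma compl_plus :
    (Subtype.val ⁻¹' Zplus : Set ↥Zset)ᶜ = (Subtype.val ⁻¹' Zminus : Set ↥Zset) := by
  ext z
  simp only [mem_compl_iff, mem_preimage]
  have hz : (z : ℂ × ℂ × ℂ × ℂ) ∈ Zplus ∪ Zminus := (Set.ext_iff.mp zset_union _).mp z.2
  constructor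
  · intro h; rcases hz with h' | h'
    · exact absurd h' h
    · exact h'
  · intro h h'
    have : (z : ℂ × ℂ × ℂ × ℂ) ∈ Zplus ∩ Zminus := ⟨h', h⟩
    rw [zpm_disjoint] at this
    exact this

lemma clopen_plus : IsClopen (Subtype.val ⁻¹' Zplus : Set ↥Zset) :=
  ⟨closed_plus, isClosed_compl_iff.mp (compl_plus ▸ closed_minus)⟩

lemma clopen_minus : IsClopen (Subtype.val ⁻¹' Zminus : Set ↥Zset) :=
  ⟨closed_minus, by
    rw [← compl_plus]; exact closed_plus.isOpen_compl⟩

lemma preconn_pre_plus : IsPreconnected (Subtype.val ⁻¹' Zplus : Set ↥Zset) := by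
  rw [← Topology.IsInducing.subtypeVal.isPreconnected_image]
  have : (Subtype.val '' (Subtype.val ⁻¹' Zplus : Set ↥Zset)) = Zplus := by
    rw [Subtype.image_preimage_coe]
    exact inter_eq_right.mpr (fun p hp => (Set.ext_iff.mp zset_union p).mpr (Or.inl hp))
  rw [this]
  exact isConnected_zplus.isPreconnected

lemma preconn_pre_minus : IsPreconnected (Subtype.val ⁻¹' Zminus : Set ↥Zset) := by
  rw [← Topology.IsInducing.subtypeVal.isPreconnected_image]
  have : (Subtype.val '' (Subtype.val ⁻¹' Zminus : Set ↥Zset)) = Zminus := by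
    rw [Subtype.image_preimage_coe]
    exact inter_eq_right.mpr (fun p hp => (Set.ext_iff.mp zset_union p).mpr (Or.inr hp))
  rw [this]
  exact isConnected_zminus.isPreconnected

lemma comp_eq_plus {z : ↥Zset} (hz : z ∈ (Subtype.val ⁻¹' Zplus : Set ↥Zset)) :
    connectedComponent z = (Subtype.val ⁻¹' Zplus : Set ↥Zset) :=
  subset_antisymm (clopen_plus.connectedComponent_subset hz)
    (preconn_pre_plus.subset_connectedComponent hz)

lemma comp_eq_minus {z : ↥Zset} (hz : z ∈ (Subtype.val ⁻¹' Zminus : Set ↥Zset)) :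
    connectedComponent z = (Subtype.val ⁻¹' Zminus : Set ↥Zset) :=
  subset_antisymm (clopen_minus.connectedComponent_subset hz)
    (preconn_pre_minus.subset_connectedComponent hz)

theorem stmt10 :
    Zset = Zplus ∪ Zminus ∧
    Zplus ∩ Zminus = ∅ ∧
    Zplus.Nonempty ∧ Zminus.Nonempty ∧
    IsConnected Zplus ∧ IsConnected Zminus ∧
    IsClosed (Subtype.val ⁻¹' Zplus : Set ↥Zset) ∧
    IsClosed (Subtype.val ⁻¹' Zminus : Set ↥Zset) ∧
    ¬ IsConnected Zset ∧
    Nat.card (ConnectedComponents ↥Zset) = 2 := by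
  have hzp : ((1 : ℂ), (1 : ℂ), (1 : ℂ), (0 : ℂ)) ∈ Zset := by
    rw [zset_union]; exact Or.inl zplus_mem
  have hzm : ((1 : ℂ), (1 : ℂ), (-1 : ℂ), (0 : ℂ)) ∈ Zset := by
    rw [zset_union]; exact Or.inr zminus_mem
  set zp : ↥Zset := ⟨_, hzp⟩ with hzpdef
  set zm : ↥Zset := ⟨_, hzm⟩ with hzmdef
  have hzpP : zp ∈ (Subtype.val ⁻¹' Zplus : Set ↥Zset) := zplus_mem
  have hzmM : zm ∈ (Subtype.val ⁻¹' Zminus : Set ↥Zset) := zminus_mem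
  have hne : (Subtype.val ⁻¹' Zplus : Set ↥Zset) ≠ (Subtype.val ⁻¹' Zminus : Set ↥Zset) := by
    intro h
    have h2 : zp ∈ (Subtype.val ⁻¹' Zminus : Set ↥Zset) := by rw [← h]; exact hzpP
    have : (zp : ℂ × ℂ × ℂ × ℂ) ∈ Zplus ∩ Zminus := ⟨hzpP, h2⟩
    rw [zpm_disjoint] at this
    exact this
  have hnotconn : ¬ IsConnected Zset := by
    intro hconn
    have : PreconnectedSpace ↥Zset := isPreconnected_iff_preconnectedSpace.mp hconn.isPreconnected
    rcases isClopen_iff.mp clopen_plus with h | h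
    · exact absurd (h ▸ hzpP) (notMem_empty _)
    · have : zm ∈ (Subtype.val ⁻¹' Zplus : Set ↥Zset) := h ▸ mem_univ zm
      have : (zm : ℂ × ℂ × ℂ × ℂ) ∈ Zplus ∩ Zminus := ⟨this, hzmM⟩
      rw [zpm_disjoint] at this
      exact this
  refine ⟨zset_union, zpm_disjoint, ⟨_, zplus_mem⟩, ⟨_, zminus_mem⟩, isConnected_zplus,
    isConnected_zminus, closed_plus, closed_minus, hnotconn, ?_⟩
  rw [Nat.card_eq_two_iff]
  refine ⟨ConnectedComponents.mk zp, ConnectedComponents.mk zm, ?_, ?_⟩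
  · intro h
    rw [ConnectedComponents.coe_eq_coe, comp_eq_plus hzpP, comp_eq_minus hzmM] at h
    exact hne h
  · ext c
    simp only [mem_insert_iff, mem_singleton_iff, mem_univ, iff_true]
    obtain ⟨z, rfl⟩ := ConnectedComponents.surjective_coe c
    have hz : (z : ℂ × ℂ × ℂ × ℂ) ∈ Zplus ∪ Zminus := (Set.ext_iff.mp zset_union _).mp z.2
    rcases hz with h | h
    · left
      rw [ConnectedComponents.coe_eq_coe, comp_eq_plus h, comp_eq_plus hzpP]
    · right
      rw [ConnectedComponents.coe_eq_coe, comp_eq_minus h, comp_eq_minus hzmM]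
end

section
/- For every nonzero complex number a, the polynomial X₁²X₂² − X₃² − a is irreducible in the polynomial ring ℂ[X₁, X₂, X₃]. (This underlies the claim in Example 5.13 that the fiber μ⁻¹(a) of the moment map μ(x) = x₁²x₂² − x₃² is irreducible for a ≠ 0.) -/
open MvPolynomial

noncomputable local instance myinst (n : ℕ) : NormalizedGCDMonoid (MvPolynomial (Fin n) ℂ) :=
  Classical.choice inferInstance

set_option synthInstance.maxHeartbeats 1000000 in
set_option maxHeartbeats 1000000 in
lemma irr_q (s : ℂ) (hs : s ≠ 0) :
    Irreducible (X 1 * X 0 - C s : MvPolynomial (Fin 2) ℂ) := by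
  have h1 : ((1 : Fin 2)) = Fin.succ 0 := rfl
  rw [← MulEquiv.irreducible_iff (finSuccEquiv ℂ 1)]
  have himg : (finSuccEquiv ℂ 1) (X 1 * X 0 - C s : MvPolynomial (Fin 2) ℂ)
      = Polynomial.C (X 0) * Polynomial.X - Polynomial.C (C s) := by
    rw [map_sub, map_mul, h1, finSuccEquiv_X_succ, finSuccEquiv_X_zero]
    simp [finSuccEquiv_apply]
  rw [himg]
  set p : Polynomial (MvPolynomial (Fin 1) ℂ) :=
    Polynomial.C (X 0) * Polynomial.X - Polynomial.C (C s) with hp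
  have hCs : IsUnit (C s : MvPolynomial (Fin 1) ℂ) :=
    (isUnit_iff_ne_zero.mpr hs).map (C : ℂ →+* MvPolynomial (Fin 1) ℂ)
  have hprim : p.IsPrimitive := by
    intro r hr
    have h0 : r ∣ p.coeff 0 := (Polynomial.C_dvd_iff_dvd_coeff r p).mp hr 0
    have : p.coeff 0 = -(C s) := by simp [hp]
    rw [this] at h0
    exact isUnit_of_dvd_unit h0 hCs.neg
  rw [hprim.irreducible_iff_irreducible_map_fraction_map (K := FractionRing (MvPolynomial (Fin 1) ℂ))]
  set φ := algebraMap (MvPolynomial (Fin 1) ℂ) (FractionRing (MvPolynomial (Fin 1) ℂ))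
  have hx0 : φ (X 0) ≠ 0 := by
    simpa using (map_ne_zero_iff φ (IsFractionRing.injective _ _)).mpr (X_ne_zero 0)
  apply Polynomial.irreducible_of_degree_eq_one
  have : p.map φ = Polynomial.C (φ (X 0)) * Polynomial.X + Polynomial.C (-(φ (C s))) := by
    rw [hp, Polynomial.map_sub, Polynomial.map_mul, Polynomial.map_C, Polynomial.map_X,
      Polynomial.map_C, map_neg, sub_eq_add_neg]
  rw [this]
  exact Polynomial.degree_linear hx0

set_option maxHeartbeats 1000000 in
theorem stmt11 (a : ℂ) (ha : a ≠ 0) :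
    Irreducible ((X 0) ^ 2 * (X 1) ^ 2 - (X 2) ^ 2 - C a : MvPolynomial (Fin 3) ℂ) := by
  obtain ⟨s, hs2⟩ := IsAlgClosed.exists_pow_nat_eq a (n := 2) (by norm_num)
  have hs : s ≠ 0 := by rintro rfl; simp at hs2; exact ha hs2.symm
  -- transfer along rename (swap 0 2) then finSuccEquiv
  rw [← MulEquiv.irreducible_iff (renameEquiv ℂ (Equiv.swap (0:Fin 3) 2))]
  rw [← MulEquiv.irreducible_iff (finSuccEquiv ℂ 2)]
  set f : MvPolynomial (Fin 2) ℂ := X 1 ^ 2 * X 0 ^ 2 - C a with hf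
  have himg : (finSuccEquiv ℂ 2) ((renameEquiv ℂ (Equiv.swap (0:Fin 3) 2))
        ((X 0) ^ 2 * (X 1) ^ 2 - (X 2) ^ 2 - C a : MvPolynomial (Fin 3) ℂ))
      = -(Polynomial.X ^ 2 - Polynomial.C f) := by
    have e0 : (Equiv.swap (0:Fin 3) 2) 0 = 2 := by decide
    have e1 : (Equiv.swap (0:Fin 3) 2) 1 = 1 := by decide
    have e2 : (Equiv.swap (0:Fin 3) 2) 2 = 0 := by decide
    have h1 : ((1 : Fin 3)) = Fin.succ 0 := rfl
    have h2 : ((2 : Fin 3)) = Fin.succ 1 := rfl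
    have hC : (finSuccEquiv ℂ 2) (C a : MvPolynomial (Fin 3) ℂ) = Polynomial.C (C a) := by
      simp [finSuccEquiv_apply]
    simp only [renameEquiv_apply, map_sub, map_mul, map_pow, rename_X, rename_C, e0, e1, e2]
    simp only [h1, h2, finSuccEquiv_X_succ, finSuccEquiv_X_zero, hC, hf,
      Polynomial.C_sub, Polynomial.C_mul, Polynomial.C_pow]
    ring
  rw [himg]
  -- irreducibility of X^2 - C f via Eisenstein at (X1*X0 - C s)
  set q : MvPolynomial (Fin 2) ℂ := X 1 * X 0 - C s with hq
  have hqirr : Irreducible q := irr_q s hs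
  have hqprime : Prime q := hqirr.prime
  have hqne : q ≠ 0 := hqprime.ne_zero
  set P : Ideal (MvPolynomial (Fin 2) ℂ) := Ideal.span {q} with hP
  have hPprime : P.IsPrime := (Ideal.span_singleton_prime hqne).mpr hqprime
  have hfactor : f = q * (X 1 * X 0 + C s) := by
    rw [hf, hq, ← hs2]; push_cast [C_pow]; ring
  set g : Polynomial (MvPolynomial (Fin 2) ℂ) := Polynomial.X ^ 2 - Polynomial.C f with hg
  have hmonic : g.Monic := Polynomial.monic_X_pow_sub_C f (by norm_num)
  have hdeg : g.natDegree = 2 := Polynomial.natDegree_X_pow_sub_C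
  have heis : g.IsEisensteinAt P := by
    constructor
    · rw [hmonic.leadingCoeff]
      intro h1
      exact hPprime.ne_top (Ideal.eq_top_of_isUnit_mem _ h1 isUnit_one)
    · intro n hn
      rw [hdeg] at hn
      interval_cases n
      · have : g.coeff 0 = -f := by simp [hg]
        rw [this]
        exact neg_mem (Ideal.mem_span_singleton.mpr ⟨_, hfactor⟩)
      · have : g.coeff 1 = 0 := by simp [hg, Polynomial.coeff_X_pow]
        rw [this]; exact zero_mem _
    · have h0 : g.coeff 0 = -f := by simp [hg]
      rw [h0, hP, Ideal.span_singleton_pow]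
      intro hmem
      rw [Ideal.mem_span_singleton] at hmem
      have hdvd : q * q ∣ q * (X 1 * X 0 + C s) := by
        rw [← hfactor, ← pow_two]; exact dvd_neg.mp hmem
      have hqdvd : q ∣ X 1 * X 0 + C s := (mul_dvd_mul_iff_left hqne).mp hdvd
      have h2s : (X 1 * X 0 + C s) - q = C (2 * s) := by
        rw [hq, map_mul]; push_cast [map_ofNat]; ring
      have : q ∣ C (2 * s) := h2s ▸ dvd_sub hqdvd dvd_rfl
      have hunit : IsUnit (C (2 * s) : MvPolynomial (Fin 2) ℂ) :=
        (isUnit_iff_ne_zero.mpr (by simp [hs])).map (C : ℂ →+* MvPolynomial (Fin 2) ℂ)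
      exact hqirr.not_isUnit (isUnit_of_dvd_unit this hunit)
  have : Irreducible g := heis.irreducible hPprime hmonic.isPrimitive (by rw [hdeg]; norm_num)
  exact (Associated.irreducible ⟨-1, by simp⟩ this)
end

section
/- For every nonzero complex number a, the set F_a = {(x₁, x₂, x₃, x₄) ∈ ℂ⁴ : x₁ ≠ 0, x₂ ≠ 0, and x₁²x₂² − x₃² = a}, equipped with the subspace topology from ℂ⁴ (with its usual topology), is connected. (Topological form of the claim in Example 5.13 that μ⁻¹(a) is irreducible for a ≠ 0, where μ(x) = x₁²x₂² − x₃².) -/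
theorem stmt12 (a : ℂ) (ha : a ≠ 0) :
    IsConnected {p : ℂ × ℂ × ℂ × ℂ |
      p.1 ≠ 0 ∧ p.2.1 ≠ 0 ∧ p.1 ^ 2 * p.2.1 ^ 2 - p.2.2.1 ^ 2 = a} := by
  have hrank : (1 : Cardinal) < Module.rank ℝ ℂ := by
    rw [Complex.rank_real_complex]; norm_num
  obtain ⟨c, hc⟩ : ∃ c : ℂ, c ^ 2 = -a :=
    IsAlgClosed.exists_pow_nat_eq (-a) (by norm_num : (0:ℕ) < 2)
  set S : Set ℂ := ({0, c, -c} : Set ℂ)ᶜ with hS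
  have hSconn : IsConnected S :=
    (Set.Finite.countable
      (by simp : ({0, c, -c} : Set ℂ).Finite)).isConnected_compl_of_one_lt_rank hrank
  have h0conn : IsConnected ({0}ᶜ : Set ℂ) :=
    (Set.countable_singleton 0).isConnected_compl_of_one_lt_rank hrank
  have hD : IsConnected (S ×ˢ (({0}ᶜ : Set ℂ) ×ˢ (Set.univ : Set ℂ))) :=
    hSconn.prod (h0conn.prod isConnected_univ)
  set φ : ℂ × ℂ × ℂ → ℂ × ℂ × ℂ × ℂ :=
    fun q => (q.2.1, (q.1 + a / q.1) / (2 * q.2.1), (a / q.1 - q.1) / 2, q.2.2) with hφ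
  have hcont : ContinuousOn φ (S ×ˢ (({0}ᶜ : Set ℂ) ×ˢ (Set.univ : Set ℂ))) := by
    have hq1 : ∀ q : ℂ × ℂ × ℂ, q ∈ S ×ˢ (({0}ᶜ : Set ℂ) ×ˢ (Set.univ : Set ℂ)) →
        q.1 ≠ 0 := by
      intro q hq
      have h := hq.1
      rw [hS] at h
      simp only [Set.mem_compl_iff, Set.mem_insert_iff, Set.mem_singleton_iff, not_or] at h
      exact h.1
    have hq2 : ∀ q : ℂ × ℂ × ℂ, q ∈ S ×ˢ (({0}ᶜ : Set ℂ) ×ˢ (Set.univ : Set ℂ)) →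
        (2 : ℂ) * q.2.1 ≠ 0 := by
      intro q hq
      exact mul_ne_zero two_ne_zero (by simpa using hq.2.1)
    rw [hφ]
    refine ContinuousOn.prodMk ?_ (ContinuousOn.prodMk ?_ (ContinuousOn.prodMk ?_ ?_))
    · exact (continuous_fst.comp continuous_snd).continuousOn
    · exact (continuousOn_fst.add (continuousOn_const.div continuousOn_fst hq1)).div
        (continuous_const.mul (continuous_fst.comp continuous_snd)).continuousOn hq2
    · exact ((continuousOn_const.div continuousOn_fst hq1).sub continuousOn_fst).div_const 2
    · exact (continuous_snd.comp continuous_snd).continuousOn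
  have himg : {p : ℂ × ℂ × ℂ × ℂ |
      p.1 ≠ 0 ∧ p.2.1 ≠ 0 ∧ p.1 ^ 2 * p.2.1 ^ 2 - p.2.2.1 ^ 2 = a}
      = φ '' (S ×ˢ (({0}ᶜ : Set ℂ) ×ˢ (Set.univ : Set ℂ))) := by
    ext ⟨x1, x2, x3, x4⟩
    simp only [Set.mem_setOf_eq]
    constructor
    · rintro ⟨h1, h2, h3⟩
      have hs0 : x1 * x2 - x3 ≠ 0 := by
        intro h
        exact ha (by linear_combination -h3 + (x1 * x2 + x3) * h)
      have hkey : ∀ s : ℂ, s = x1 * x2 - x3 → s ^ 2 = -a → False := by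
        intro s hs hsq
        rw [hs] at hsq
        have h0 : (2 : ℂ) * (x1 * x2) * (x1 * x2 - x3) = 0 := by
          linear_combination hsq + h3
        exact mul_ne_zero (mul_ne_zero two_ne_zero (mul_ne_zero h1 h2)) hs0 h0
      have has : a / (x1 * x2 - x3) = x1 * x2 + x3 := by
        field_simp
        linear_combination -h3
      refine ⟨(x1 * x2 - x3, x1, x4), ⟨?_, by simpa using h1, trivial⟩, ?_⟩
      · rw [hS]
        simp only [Set.mem_compl_iff, Set.mem_insert_iff, Set.mem_singleton_iff, not_or]
        refine ⟨hs0, ?_, ?_⟩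
        · intro h
          exact hkey _ rfl (by rw [h, hc])
        · intro h
          exact hkey _ rfl (by rw [h, neg_sq, hc])
      · rw [hφ]
        simp only [Prod.mk.injEq]
        refine ⟨trivial, ?_, ?_, trivial⟩
        · rw [has]
          field_simp
          ring
        · rw [has]
          ring
    · rintro ⟨⟨s, y1, y4⟩, ⟨hsS, hy1, -⟩, heq⟩
      rw [hS] at hsS
      simp only [Set.mem_compl_iff, Set.mem_insert_iff, Set.mem_singleton_iff, not_or] at hsS
      obtain ⟨hs0, hsc, hsc'⟩ := hsS
      have hy1 : y1 ≠ 0 := by simpa using hy1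
      have hsum : s + a / s ≠ 0 := by
        intro h
        have hsq : s ^ 2 + a = (s + a / s) * s := by
          field_simp
        rw [h, zero_mul] at hsq
        have hfac : (s - c) * (s + c) = 0 := by linear_combination hsq - hc
        rcases mul_eq_zero.mp hfac with h' | h'
        · exact hsc (sub_eq_zero.mp h')
        · exact hsc' (eq_neg_of_add_eq_zero_left h')
      rw [hφ] at heq
      simp only [Prod.mk.injEq] at heq
      obtain ⟨e1, e2, e3, e4⟩ := heq
      refine ⟨by rw [← e1]; exact hy1, ?_, ?_⟩
      · rw [← e2]
        exact div_ne_zero hsum (mul_ne_zero two_ne_zero hy1)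
      · rw [← e1, ← e2, ← e3]
        field_simp
        ring
  rw [himg]
  exact hD.image φ hcont
end
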